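/- arXiv:2003.07345 — 2 statements merged into one kernel-verified Lean document; each statement's English description precedes it below -/
import Mathlib

section
/- If A ∈ S^n is a real symmetric matrix with all diagonal entries equal to zero, then ‖A‖_{γ,d} = ‖A‖_{Γ,d} for every d ∈ ℕ. -/
noncomputable def gammaSemi {ι : Type*} [Fintype ι] (d : ℕ) (A : Matrix ι ι ℝ) : ℝ :=
  sSup { r | ∃ x : ι → EuclideanSpace ℝ (Fin d), (∀ i, ‖x i‖ = 1) ∧
    r = |∑ i, ∑ j, A i j * (inner ℝ (x i) (x j) : ℝ)| }

noncomputable def GammaNorm {ι : Type*} [Fintype ι] (d : ℕ) (A : Matrix ι ι ℝ) : ℝ :=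
  sSup { r | ∃ x : ι → EuclideanSpace ℝ (Fin d), (∀ i, ‖x i‖ ≤ 1) ∧
    r = |∑ i, ∑ j, A i j * (inner ℝ (x i) (x j) : ℝ)| }

noncomputable def GNorm {ι κ : Type*} [Fintype ι] [Fintype κ] (d : ℕ) (B : Matrix ι κ ℝ) : ℝ :=
  sSup { r | ∃ (x : ι → EuclideanSpace ℝ (Fin d)) (y : κ → EuclideanSpace ℝ (Fin d)),
    (∀ i, ‖x i‖ ≤ 1) ∧ (∀ j, ‖y j‖ ≤ 1) ∧
    r = |∑ i, ∑ j, B i j * (inner ℝ (x i) (y j) : ℝ)| }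

/-!
With zero diagonal, `∑ a_ij ⟪x_i, x_j⟫` is an affine function `⟪x_k, v⟫ + c` of each single
vector `x_k`, and `|⟪w, v⟫ + c|` on the unit ball is maximised on the unit sphere, at `±v/‖v‖`
with the sign of `c`. Replacing the vectors one at a time by unit vectors thus never decreases the
absolute value of the form, so the supremum over the ball is already attained on unit vectors.
-/

open Finset RealInnerProductSpace

theorem exists_forall_le_of_forall_update_le {ι α β : Type*} [Finite ι] [DecidableEq ι]
    [Preorder β] {P Q : α → Prop} (hQP : ∀ a, Q a → P a) {g : (ι → α) → β}
    (hg : ∀ x, (∀ i, P (x i)) → ∀ k, ∃ a, Q a ∧ g x ≤ g (Function.update x k a))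
    {x : ι → α} (hx : ∀ i, P (x i)) : ∃ y : ι → α, (∀ i, Q (y i)) ∧ g x ≤ g y := by
  cases nonempty_fintype ι
  suffices ∀ s : Finset ι, ∃ y : ι → α, (∀ i, P (y i)) ∧ (∀ i ∈ s, Q (y i)) ∧ g x ≤ g y by
    obtain ⟨y, -, hQ, hle⟩ := this univ
    exact ⟨y, fun i => hQ i (mem_univ i), hle⟩
  intro s
  induction s using Finset.induction_on with
  | empty => exact ⟨x, hx, by simp, le_rfl⟩
  | insert k s _ ih =>
    obtain ⟨y, hyP, hyQ, hxy⟩ := ih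
    obtain ⟨a, ha, hya⟩ := hg y hyP k
    refine ⟨Function.update y k a, fun i => ?_, fun i hi => ?_, hxy.trans hya⟩
    · rcases eq_or_ne i k with rfl | h
      · simpa using hQP a ha
      · simpa [h] using hyP i
    · rcases eq_or_ne i k with rfl | h
      · simpa using ha
      · simpa [h] using hyQ i ((mem_insert.1 hi).resolve_left h)

section

variable {E : Type*} [NormedAddCommGroup E] [InnerProductSpace ℝ E]

theorem exists_norm_eq_one_inner_eq_norm [Nontrivial E] (v : E) :
    ∃ w : E, ‖w‖ = 1 ∧ ⟪w, v⟫ = ‖v‖ := by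
  rcases eq_or_ne v 0 with rfl | hv
  · obtain ⟨w, hw⟩ := exists_norm_eq E zero_le_one
    exact ⟨w, hw, by simp⟩
  · refine ⟨‖v‖⁻¹ • v, norm_smul_inv_norm hv, ?_⟩
    rw [real_inner_smul_left, real_inner_self_eq_norm_mul_norm]
    field_simp

theorem exists_norm_eq_one_abs_inner_add_le [Nontrivial E] (v : E) (c : ℝ) {u : E}
    (hu : ‖u‖ ≤ 1) : ∃ w : E, ‖w‖ = 1 ∧ |⟪u, v⟫ + c| ≤ |⟪w, v⟫ + c| := by
  have hbound : |⟪u, v⟫ + c| ≤ ‖v‖ + |c| :=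
    (abs_add_le _ _).trans <| add_le_add_left
      ((abs_real_inner_le_norm u v).trans (mul_le_of_le_one_left (norm_nonneg v) hu)) _
  obtain ⟨w, hw, hwv⟩ := exists_norm_eq_one_inner_eq_norm v
  rcases le_or_gt 0 c with hc | hc
  · refine ⟨w, hw, hbound.trans_eq ?_⟩
    rw [hwv, abs_of_nonneg hc, abs_of_nonneg (by positivity)]
  · refine ⟨-w, by rw [norm_neg, hw], hbound.trans_eq ?_⟩
    rw [inner_neg_left, hwv, abs_of_neg hc, abs_of_neg (by linarith [norm_nonneg v])]
    ring

variable {ι : Type*} [Fintype ι]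

def gramForm (A : Matrix ι ι ℝ) (x : ι → E) : ℝ :=
  ∑ i, ∑ j, A i j * ⟪x i, x j⟫

theorem gramForm_update_eq [DecidableEq ι] (A : Matrix ι ι ℝ) {k : ι} (hk : A k k = 0)
    (x : ι → E) : ∃ (v : E) (c : ℝ), ∀ w : E,
      gramForm A (Function.update x k w) = ⟪w, v⟫ + c := by
  set y := Function.update x k 0
  have hsplit : ∀ w, Function.update x k w = y + Pi.single k w := by
    intro w; ext1 i; rcases eq_or_ne i k with rfl | h <;> simp [y, *]
  refine ⟨∑ j, (A k j + A j k) • y j, gramForm A y, fun w => ?_⟩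
  have hsingle_left : ∀ i (u : E),
      ⟪(Pi.single k w : ι → E) i, u⟫ = if i = k then ⟪w, u⟫ else 0 := by
    intro i u; rcases eq_or_ne i k with rfl | h <;> simp [*]
  have hsingle_right : ∀ i (u : E),
      ⟪u, (Pi.single k w : ι → E) i⟫ = if i = k then ⟪w, u⟫ else 0 := by
    intro i u; rw [real_inner_comm, hsingle_left]
  simp only [hsplit, gramForm, Pi.add_apply, inner_add_left, inner_add_right, mul_add,
    sum_add_distrib]
  -- the term quadratic in `w` carries the coefficient `A k k = 0`
  simp only [hsingle_left, hsingle_right, mul_ite, mul_zero, sum_ite_irrel, sum_const_zero,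
    sum_ite_eq', mem_univ, ↓reduceIte, inner_self_eq_norm_sq_to_K, Real.ringHom_apply, hk,
    zero_mul, add_zero, inner_sum, real_inner_smul_right, add_mul, sum_add_distrib]
  ring

theorem exists_norm_eq_one_abs_gramForm_update_le [Nontrivial E] [DecidableEq ι]
    (A : Matrix ι ι ℝ) {k : ι} (hk : A k k = 0) (x : ι → E) (hxk : ‖x k‖ ≤ 1) :
    ∃ w : E, ‖w‖ = 1 ∧ |gramForm A x| ≤ |gramForm A (Function.update x k w)| := by
  obtain ⟨v, c, hform⟩ := gramForm_update_eq A hk x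
  obtain ⟨w, hw, hle⟩ := exists_norm_eq_one_abs_inner_add_le v c hxk
  refine ⟨w, hw, ?_⟩
  rwa [hform, ← Function.update_eq_self k x, hform]

theorem exists_forall_norm_eq_one_abs_gramForm_le [Nontrivial E] (A : Matrix ι ι ℝ)
    (hdiag : ∀ i, A i i = 0) {x : ι → E} (hx : ∀ i, ‖x i‖ ≤ 1) :
    ∃ y : ι → E, (∀ i, ‖y i‖ = 1) ∧ |gramForm A x| ≤ |gramForm A y| := by
  classical
  exact exists_forall_le_of_forall_update_le (fun _ h => h.le)
    (fun y hy k => exists_norm_eq_one_abs_gramForm_update_le A (hdiag k) y (hy k)) hx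

end

theorem gammaSemi_eq_GammaNorm_of_diag_zero_general (n d : ℕ) (hd : 1 ≤ d)
    (A : Matrix (Fin n) (Fin n) ℝ) (hdiag : ∀ i, A i i = 0) :
    gammaSemi d A = GammaNorm d A := by
  have : Nonempty (Fin d) := Fin.pos_iff_nonempty.1 hd
  apply csSup_eq_csSup_of_forall_exists_le
  · rintro _ ⟨x, hx, rfl⟩
    exact ⟨_, ⟨x, fun i => (hx i).le, rfl⟩, le_rfl⟩
  · rintro _ ⟨x, hx, rfl⟩
    obtain ⟨y, hy, hle⟩ := exists_forall_norm_eq_one_abs_gramForm_le A hdiag hx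
    exact ⟨_, ⟨y, hy, rfl⟩, hle⟩

/-- If A is symmetric with zero diagonal, then ‖A‖_{γ,d} = ‖A‖_{Γ,d}. -/
theorem gammaSemi_eq_GammaNorm_of_diag_zero (n d : ℕ) (hd : 1 ≤ d)
    (A : Matrix (Fin n) (Fin n) ℝ) (hA : A.IsSymm) (hdiag : ∀ i, A i i = 0) :
    gammaSemi d A = GammaNorm d A :=
  gammaSemi_eq_GammaNorm_of_diag_zero_general n d hd A hdiag
end

section
/- Let A = [[A₁, −B],[−Bᵀ, A₂]] ∈ S^{m+n} where A₁ ∈ S^m and A₂ ∈ S^n have nonnegative entries and B ∈ ℝ^{m×n} has nonnegative entries. Then for every d ∈ ℕ: ‖A‖_{γ,d} = ‖A‖_{Γ,d} = ‖A‖_{G,d} = ∑_{i,j} |a_{ij}|. -/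
/-!
Every Grothendieck-type norm is at most `∑ |aᵢⱼ|`, since each `|⟪xᵢ, yⱼ⟫| ≤ 1`. The bound is
attained as soon as the signs of `A` factor as `sign aᵢⱼ = sᵢ sⱼ` for some `s ∈ {±1}ⁱ`: take
`xᵢ = yᵢ = sᵢ e` for a fixed unit vector `e`. The signed block matrix has this pattern with
`s = (1, …, 1, -1, …, -1)`.
-/

open Finset

section SignPattern

variable {ι : Type*} [Fintype ι]

theorem abs_sum_mul_inner_le_sum_abs {κ E : Type*} [Fintype κ]
    [NormedAddCommGroup E] [InnerProductSpace ℝ E] (A : Matrix ι κ ℝ)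
    {x : ι → E} {y : κ → E} (hx : ∀ i, ‖x i‖ ≤ 1) (hy : ∀ j, ‖y j‖ ≤ 1) :
    |∑ i, ∑ j, A i j * inner ℝ (x i) (y j)| ≤ ∑ i, ∑ j, |A i j| := by
  have hinner (i : ι) (j : κ) : |inner ℝ (x i) (y j)| ≤ 1 :=
    (abs_real_inner_le_norm _ _).trans (mul_le_one₀ (hx i) (norm_nonneg _) (hy j))
  calc |∑ i, ∑ j, A i j * inner ℝ (x i) (y j)|
      ≤ ∑ i, ∑ j, |A i j * inner ℝ (x i) (y j)| :=
        (abs_sum_le_sum_abs _ _).trans (sum_le_sum fun i _ => abs_sum_le_sum_abs _ _)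
    _ ≤ ∑ i, ∑ j, |A i j| := by
        refine sum_le_sum fun i _ => sum_le_sum fun j _ => ?_
        rw [abs_mul]
        exact mul_le_of_le_one_right (abs_nonneg _) (hinner i j)

theorem sum_mul_inner_smul_eq_sum_abs {E : Type*} [NormedAddCommGroup E]
    [InnerProductSpace ℝ E] (A : Matrix ι ι ℝ) {s : ι → ℝ} (hs : ∀ i, |s i| = 1)
    (hA : ∀ i j, 0 ≤ s i * A i j * s j) {e : E} (he : ‖e‖ = 1) :
    ∑ i, ∑ j, A i j * inner ℝ (s i • e) (s j • e) = ∑ i, ∑ j, |A i j| := by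
  refine sum_congr rfl fun i _ => sum_congr rfl fun j _ => ?_
  have hterm : A i j * inner ℝ (s i • e) (s j • e) = s i * A i j * s j := by
    rw [real_inner_smul_left, real_inner_smul_right, real_inner_self_eq_norm_sq, he]
    ring
  rw [hterm, ← abs_of_nonneg (hA i j), abs_mul, abs_mul, hs, hs, one_mul, mul_one]

theorem exists_unit_vectors_abs_sum_mul_inner_eq {d : ℕ} (hd : 1 ≤ d) (A : Matrix ι ι ℝ)
    {s : ι → ℝ} (hs : ∀ i, |s i| = 1) (hA : ∀ i j, 0 ≤ s i * A i j * s j) :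
    ∃ x : ι → EuclideanSpace ℝ (Fin d), (∀ i, ‖x i‖ = 1) ∧
      ∑ i, ∑ j, |A i j| = |∑ i, ∑ j, A i j * inner ℝ (x i) (x j)| := by
  set e : EuclideanSpace ℝ (Fin d) := EuclideanSpace.single ⟨0, hd⟩ 1
  have he : ‖e‖ = 1 := by simp [e]
  refine ⟨fun i => s i • e, fun i => by rw [norm_smul, Real.norm_eq_abs, hs, he, one_mul], ?_⟩
  rw [sum_mul_inner_smul_eq_sum_abs A hs hA he,
    abs_of_nonneg (sum_nonneg fun i _ => sum_nonneg fun j _ => abs_nonneg _)]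

variable {d : ℕ} (A : Matrix ι ι ℝ) {s : ι → ℝ}

theorem gammaSemi_eq_sum_abs (hd : 1 ≤ d) (hs : ∀ i, |s i| = 1)
    (hA : ∀ i j, 0 ≤ s i * A i j * s j) : gammaSemi d A = ∑ i, ∑ j, |A i j| := by
  obtain ⟨x, hx, hsum⟩ := exists_unit_vectors_abs_sum_mul_inner_eq hd A hs hA
  refine IsGreatest.csSup_eq ⟨⟨x, hx, hsum⟩, ?_⟩
  rintro r ⟨y, hy, rfl⟩
  exact abs_sum_mul_inner_le_sum_abs A (fun i => (hy i).le) (fun i => (hy i).le)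

theorem GammaNorm_eq_sum_abs (hd : 1 ≤ d) (hs : ∀ i, |s i| = 1)
    (hA : ∀ i j, 0 ≤ s i * A i j * s j) : GammaNorm d A = ∑ i, ∑ j, |A i j| := by
  obtain ⟨x, hx, hsum⟩ := exists_unit_vectors_abs_sum_mul_inner_eq hd A hs hA
  refine IsGreatest.csSup_eq ⟨⟨x, fun i => (hx i).le, hsum⟩, ?_⟩
  rintro r ⟨y, hy, rfl⟩
  exact abs_sum_mul_inner_le_sum_abs A hy hy

theorem GNorm_eq_sum_abs (hd : 1 ≤ d) (hs : ∀ i, |s i| = 1)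
    (hA : ∀ i j, 0 ≤ s i * A i j * s j) : GNorm d A = ∑ i, ∑ j, |A i j| := by
  obtain ⟨x, hx, hsum⟩ := exists_unit_vectors_abs_sum_mul_inner_eq hd A hs hA
  refine IsGreatest.csSup_eq ⟨⟨x, x, fun i => (hx i).le, fun i => (hx i).le, hsum⟩, ?_⟩
  rintro r ⟨y, z, hy, hz, rfl⟩
  exact abs_sum_mul_inner_le_sum_abs A hy hz

end SignPattern

theorem Matrix.fromBlocks_neg_sign_pattern {m n : Type*} {A₁ : Matrix m m ℝ}
    {A₂ : Matrix n n ℝ} {B : Matrix m n ℝ} (hA₁ : ∀ i j, 0 ≤ A₁ i j)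
    (hA₂ : ∀ i j, 0 ≤ A₂ i j) (hB : ∀ i j, 0 ≤ B i j) (i j : m ⊕ n) :
    0 ≤ Sum.elim (fun _ => 1) (fun _ => -1) i * Matrix.fromBlocks A₁ (-B) (-B.transpose) A₂ i j *
      Sum.elim (fun _ => 1) (fun _ => -1) j := by
  rcases i with i | i <;> rcases j with j | j <;> simp [hA₁, hA₂, hB]

theorem abs_sum_elim_one_neg_one {m n : Type*} (i : m ⊕ n) :
    |Sum.elim (fun _ => (1 : ℝ)) (fun _ => -1) i| = 1 := by
  rcases i with i | i <;> simp

theorem grothendieck_norms_signed_block_general (m n d : ℕ) (hd : 1 ≤ d)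
    (A₁ : Matrix (Fin m) (Fin m) ℝ) (A₂ : Matrix (Fin n) (Fin n) ℝ)
    (B : Matrix (Fin m) (Fin n) ℝ)
    (hA₁pos : ∀ i j, 0 ≤ A₁ i j) (hA₂pos : ∀ i j, 0 ≤ A₂ i j)
    (hBpos : ∀ i j, 0 ≤ B i j) :
    gammaSemi d (Matrix.fromBlocks A₁ (-B) (-B.transpose) A₂) =
      ∑ i, ∑ j, |Matrix.fromBlocks A₁ (-B) (-B.transpose) A₂ i j| ∧
    GammaNorm d (Matrix.fromBlocks A₁ (-B) (-B.transpose) A₂) =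
      ∑ i, ∑ j, |Matrix.fromBlocks A₁ (-B) (-B.transpose) A₂ i j| ∧
    GNorm d (Matrix.fromBlocks A₁ (-B) (-B.transpose) A₂) =
      ∑ i, ∑ j, |Matrix.fromBlocks A₁ (-B) (-B.transpose) A₂ i j| := by
  have hsign := Matrix.fromBlocks_neg_sign_pattern hA₁pos hA₂pos hBpos
  exact ⟨gammaSemi_eq_sum_abs _ hd abs_sum_elim_one_neg_one hsign,
    GammaNorm_eq_sum_abs _ hd abs_sum_elim_one_neg_one hsign,
    GNorm_eq_sum_abs _ hd abs_sum_elim_one_neg_one hsign⟩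

/-- Grothendieck d-norms of a block matrix [[A₁,−B],[−Bᵀ,A₂]] with nonnegative blocks. -/
theorem grothendieck_norms_signed_block (m n d : ℕ) (hd : 1 ≤ d)
    (A₁ : Matrix (Fin m) (Fin m) ℝ) (A₂ : Matrix (Fin n) (Fin n) ℝ)
    (B : Matrix (Fin m) (Fin n) ℝ)
    (hA₁ : A₁.IsSymm) (hA₂ : A₂.IsSymm)
    (hA₁pos : ∀ i j, 0 ≤ A₁ i j) (hA₂pos : ∀ i j, 0 ≤ A₂ i j)
    (hBpos : ∀ i j, 0 ≤ B i j) :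
    gammaSemi d (Matrix.fromBlocks A₁ (-B) (-B.transpose) A₂) =
      ∑ i, ∑ j, |Matrix.fromBlocks A₁ (-B) (-B.transpose) A₂ i j| ∧
    GammaNorm d (Matrix.fromBlocks A₁ (-B) (-B.transpose) A₂) =
      ∑ i, ∑ j, |Matrix.fromBlocks A₁ (-B) (-B.transpose) A₂ i j| ∧
    GNorm d (Matrix.fromBlocks A₁ (-B) (-B.transpose) A₂) =
      ∑ i, ∑ j, |Matrix.fromBlocks A₁ (-B) (-B.transpose) A₂ i j| :=
  grothendieck_norms_signed_block_general m n d hd A₁ A₂ B hA₁pos hA₂pos hBpos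
end
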